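/- If T_1,...,T_n are independent [0,∞]-valued random variables, then R_S(t) = Σ_{A⊆[n]} m_v(A) · Π_{i∈A} R_i(t), i.e., the system reliability equals the primal Möbius form (reliability polynomial) evaluated at the component reliabilities. -/

import Mathlib

open scoped ENNReal

/-- The Möbius transform of a set function `v : 2^[n] → ℤ`. -/
def mobiusTransform {n : ℕ} (v : Finset (Fin n) → ℤ) (A : Finset (Fin n)) : ℤ :=
  ∑ B ∈ A.powerset, (-1) ^ (A.card - B.card) * v B

/-!
Let `S ω` be the set of components still working at time `t`. The system works iff `S ω`
contains a path set, i.e. iff `v (S ω) = 1`, so `R_S(t) = 𝔼[v ∘ S]`. Möbius inversion gives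
`v C = ∑_{A ⊆ C} m_v(A)`, hence `𝔼[v ∘ S] = ∑_A m_v(A) ℙ(A ⊆ S)`, and by independence
`ℙ(A ⊆ S) = ∏_{i ∈ A} R_i(t)`.
-/

open Finset MeasureTheory ProbabilityTheory

theorem Finset.sum_Icc_neg_one_pow_card_sub {α : Type*} [DecidableEq α] {B C : Finset α}
    (h : B ⊆ C) : ∑ A ∈ Icc B C, (-1 : ℤ) ^ (#A - #B) = if B = C then 1 else 0 := by
  have hdisj {D : Finset α} (hD : D ∈ (C \ B).powerset) : Disjoint B D :=
    disjoint_sdiff.mono_right (mem_powerset.1 hD)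
  have hinj : Set.InjOn (B ∪ ·) (C \ B).powerset := fun D hD E hE hDE => by
    have := congrArg (· \ B) hDE
    simpa only [union_sdiff_cancel_left (hdisj hD), union_sdiff_cancel_left (hdisj hE)] using this
  rw [Icc_eq_image_powerset h, sum_image hinj,
    sum_congr rfl fun D hD => by rw [card_union_of_disjoint (hdisj hD), Nat.add_sub_cancel_left]]
  simp only [sum_powerset_neg_one_pow_card, sdiff_eq_empty_iff_subset, ← h.ge_iff_eq]

theorem sum_powerset_mobiusTransform {n : ℕ} (v : Finset (Fin n) → ℤ) (C : Finset (Fin n)) :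
    ∑ A ∈ C.powerset, mobiusTransform v A = v C := by
  simp only [mobiusTransform]
  rw [sum_comm' (t' := C.powerset) (s' := fun B => Icc B C) (fun A B => by
    simp only [mem_powerset, mem_Icc]; grind),
    sum_congr rfl fun B hB => by
      rw [← sum_mul, sum_Icc_neg_one_pow_card_sub (mem_powerset.1 hB), ite_mul, one_mul, zero_mul],
    sum_ite_eq', if_pos (mem_powerset_self C)]

theorem Finset.lt_sup_inf_iff {ι α : Type*} [LinearOrder α] [BoundedOrder α]
    {F : Finset (Finset ι)} (hF : ∅ ∉ F) (x : ι → α) (t : α) :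
    t < F.sup (fun A => A.inf x) ↔ ∃ A ∈ F, ∀ i ∈ A, t < x i := by
  rw [Finset.lt_sup_iff]
  refine exists_congr fun A => and_congr_right fun hA => ?_
  have hne : A.Nonempty := nonempty_iff_ne_empty.2 fun h => hF (h ▸ hA)
  rw [← inf'_eq_inf hne, lt_inf'_iff]

theorem eq_one_iff_exists_subset_eq_one {α : Type*} {v : Finset α → ℤ}
    (hv : ∀ A, v A = 0 ∨ v A = 1) (hmono : Monotone v) (C : Finset α) :
    v C = 1 ↔ ∃ A, v A = 1 ∧ A ⊆ C :=
  ⟨fun h => ⟨C, h, subset_rfl⟩, fun ⟨A, hA, hAC⟩ => by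
    have := hmono hAC
    rcases hv C with h | h <;> omega⟩

theorem integral_mobiusTransform {n : ℕ} {Ω : Type*} [MeasurableSpace Ω] (μ : Measure Ω)
    [IsFiniteMeasure μ] (S : Ω → Finset (Fin n)) (hS : ∀ A, MeasurableSet {ω | A ⊆ S ω})
    (v : Finset (Fin n) → ℤ) :
    ∫ ω, (v (S ω) : ℝ) ∂μ = ∑ A, (mobiusTransform v A : ℝ) * μ.real {ω | A ⊆ S ω} := by
  have hpointwise (ω : Ω) :
      (v (S ω) : ℝ) = ∑ A, (mobiusTransform v A : ℝ) * {ω' | A ⊆ S ω'}.indicator 1 ω := by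
    rw [← sum_powerset_mobiusTransform v (S ω), ← filter_subset_univ, sum_filter, Int.cast_sum]
    refine sum_congr rfl fun A _ => ?_
    by_cases h : A ⊆ S ω <;> simp [h]
  simp only [hpointwise]
  rw [integral_finsetSum _ fun A _ => ((integrable_const 1).indicator (hS A)).const_mul _]
  simp only [integral_const_mul]
  exact sum_congr rfl fun A _ => by rw [integral_indicator_one (hS A)]

section Survivors

variable {ι Ω β : Type*} [Fintype ι] [LinearOrder β]

def survivors (T : ι → Ω → β) (t : β) (ω : Ω) : Finset ι := {i | t < T i ω}

theorem setOf_subset_survivors (T : ι → Ω → β) (t : β) (A : Finset ι) :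
    {ω | A ⊆ survivors T t ω} = ⋂ i ∈ A, T i ⁻¹' Set.Ioi t := by
  ext ω
  simp [survivors, subset_iff]

variable [MeasurableSpace Ω] [TopologicalSpace β] [OrderClosedTopology β] [MeasurableSpace β]
  [OpensMeasurableSpace β]

theorem measurableSet_subset_survivors {T : ι → Ω → β} (hT : ∀ i, Measurable (T i)) (t : β)
    (A : Finset ι) : MeasurableSet {ω | A ⊆ survivors T t ω} := by
  rw [setOf_subset_survivors]
  exact A.measurableSet_biInter fun i _ => hT i measurableSet_Ioi

theorem ProbabilityTheory.iIndepFun.measureReal_subset_survivors {μ : Measure Ω}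
    {T : ι → Ω → β} (hindep : iIndepFun T μ) (t : β) (A : Finset ι) :
    μ.real {ω | A ⊆ survivors T t ω} = ∏ i ∈ A, μ.real {ω | t < T i ω} := by
  rw [setOf_subset_survivors, measureReal_def,
    hindep.measure_inter_preimage_eq_mul A fun _ _ => measurableSet_Ioi, ENNReal.toReal_prod]
  rfl

end Survivors

theorem reliability_indep_mobius_general {n : ℕ} {Ω : Type*} [MeasurableSpace Ω]
    (μ : MeasureTheory.Measure Ω) [MeasureTheory.IsProbabilityMeasure μ]
    (T : Fin n → Ω → ℝ≥0∞) (hT : ∀ i, Measurable (T i))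
    (hindep : ProbabilityTheory.iIndepFun T μ)
    (v : Finset (Fin n) → ℤ)
    (hv : ∀ A, v A = 0 ∨ v A = 1)
    (hmono : ∀ A B : Finset (Fin n), A ⊆ B → v A ≤ v B)
    (hnonconst : ∃ A B : Finset (Fin n), v A ≠ v B)
    (t : ℝ≥0∞) :
    (μ {ω | (Finset.univ.filter (fun A : Finset (Fin n) => v A = 1)).sup
        (fun A => A.inf (fun i => T i ω)) > t}).toReal =
      ∑ A : Finset (Fin n), (mobiusTransform v A : ℝ) *
        ∏ i ∈ A, (μ {ω | T i ω > t}).toReal := by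
  have hv_empty : v ∅ = 0 := by
    obtain ⟨A, B, hAB⟩ := hnonconst
    refine (hv ∅).resolve_right fun h => hAB ?_
    rw [(eq_one_iff_exists_subset_eq_one hv hmono A).2 ⟨∅, h, empty_subset A⟩,
      (eq_one_iff_exists_subset_eq_one hv hmono B).2 ⟨∅, h, empty_subset B⟩]
  have hevent : {ω | (Finset.univ.filter (fun A : Finset (Fin n) => v A = 1)).sup
      (fun A => A.inf (fun i => T i ω)) > t} = {ω | v (survivors T t ω) = 1} := by
    ext ω
    rw [Set.mem_ofPred_eq, Set.mem_ofPred_eq, gt_iff_lt,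
      lt_sup_inf_iff (by simp [hv_empty]), eq_one_iff_exists_subset_eq_one hv hmono]
    simp [survivors, subset_iff]
  have hmeas : MeasurableSet {ω | v (survivors T t ω) = 1} :=
    hevent ▸ measurableSet_lt measurable_const (by fun_prop)
  calc (μ _).toReal = μ.real {ω | v (survivors T t ω) = 1} := by rw [hevent]; rfl
    _ = ∫ ω, (v (survivors T t ω) : ℝ) ∂μ := by
      rw [← integral_indicator_one hmeas]
      congr with ω
      rcases hv (survivors T t ω) with h | h <;> simp [h]
    _ = ∑ A, (mobiusTransform v A : ℝ) * μ.real {ω | A ⊆ survivors T t ω} :=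
      integral_mobiusTransform μ _ (measurableSet_subset_survivors hT t) v
    _ = _ := by simp only [hindep.measureReal_subset_survivors, gt_iff_lt]; rfl

/-- Reliability polynomial for independent component lifetimes:
`R_S(t) = Σ_A m_v(A) Π_{i∈A} R_i(t)`. -/
theorem reliability_indep_mobius {n : ℕ} {Ω : Type*} [MeasurableSpace Ω]
    (μ : MeasureTheory.Measure Ω) [MeasureTheory.IsProbabilityMeasure μ]
    (T : Fin n → Ω → ℝ≥0∞) (hT : ∀ i, Measurable (T i))
    (hindep : ProbabilityTheory.iIndepFun T μ)
    (v : Finset (Fin n) → ℤ)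
    (hv : ∀ A, v A = 0 ∨ v A = 1)
    (hmono : ∀ A B : Finset (Fin n), A ⊆ B → v A ≤ v B)
    (hnonconst : ∃ A B : Finset (Fin n), v A ≠ v B)
    (t : ℝ≥0∞) (ht : 0 ≤ t) :
    (μ {ω | (Finset.univ.filter (fun A : Finset (Fin n) => v A = 1)).sup
        (fun A => A.inf (fun i => T i ω)) > t}).toReal =
      ∑ A : Finset (Fin n), (mobiusTransform v A : ℝ) *
        ∏ i ∈ A, (μ {ω | T i ω > t}).toReal :=
  reliability_indep_mobius_general μ T hT hindep v hv hmono hnonconst t
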